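/- arXiv:2605.23208 — 4 statements merged into one kernel-verified Lean document; each statement's English description precedes it below -/
import Mathlib

section
/- Let Y_1,...,Y_N be independent random variables with common mean μ and finite variances, and let w_1,...,w_N be fixed weights with w_i ≥ 0, Σ w_i = 1, and max_i w_i < 1/2. Define h_i = w_i²/(1 − 2w_i), H = Σ_ℓ h_ℓ, and μ̂ = Σ_i w_i Y_i. Then the estimator V̂ = Σ_i [h_i/(1+H)] (Y_i − μ̂)² satisfies E[V̂] = Var(μ̂) = Σ_i w_i² Var(Y_i). -/
/-!
Each residual `Y i - μ̂` has mean zero because the weights sum to one, so its second moment is its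
variance. Writing the residual as `∑ l, (δ_il - w l) • Y l` and using independence gives
`E[(Y i - μ̂)²] = (1 - 2 w i) Var(Y i) + Var(μ̂)`. The weights `h i = w i² / (1 - 2 w i)` are chosen
so that `h i (1 - 2 w i) = w i²`; summing therefore gives `Var(μ̂) + H Var(μ̂)`.
-/

open MeasureTheory ProbabilityTheory Finset

section Residual

variable {Ω ι : Type*} [MeasurableSpace Ω] {μ : Measure Ω} [Fintype ι] {Y : ι → Ω → ℝ}

lemma variance_sum_const_mul_of_pairwise_indepFun (hY : ∀ i, MemLp (Y i) 2 μ)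
    (hindep : Pairwise fun i j => Y i ⟂ᵢ[μ] Y j) (a : ι → ℝ) :
    Var[fun ω => ∑ l, a l * Y l ω; μ] = ∑ l, a l ^ 2 * Var[Y l; μ] := by
  have hsum : (fun ω => ∑ l, a l * Y l ω) = ∑ l, fun ω => a l * Y l ω := by
    funext ω; simp
  rw [hsum, IndepFun.variance_sum (fun l _ => (hY l).const_mul (a l))
    fun i _ j _ hij => (hindep hij).comp (measurable_const_mul _) (measurable_const_mul _)]
  exact sum_congr rfl fun l _ => variance_const_mul (a l) (Y l) μ

lemma variance_sub_sum_const_mul_of_pairwise_indepFun (hY : ∀ i, MemLp (Y i) 2 μ)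
    (hindep : Pairwise fun i j => Y i ⟂ᵢ[μ] Y j) (w : ι → ℝ) (i : ι) :
    Var[fun ω => Y i ω - ∑ l, w l * Y l ω; μ]
      = (1 - 2 * w i) * Var[Y i; μ] + ∑ l, w l ^ 2 * Var[Y l; μ] := by
  classical
  have hres : (fun ω => Y i ω - ∑ l, w l * Y l ω)
      = fun ω => ∑ l, ((Pi.single i 1 : ι → ℝ) l - w l) * Y l ω := by
    funext ω
    simp [sub_mul, sum_sub_distrib, Pi.single_apply]
  rw [hres, variance_sum_const_mul_of_pairwise_indepFun hY hindep]
  have hterm : ∀ l, ((Pi.single i 1 : ι → ℝ) l - w l) ^ 2 * Var[Y l; μ]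
      = (Pi.single i ((1 - 2 * w i) * Var[Y i; μ]) : ι → ℝ) l + w l ^ 2 * Var[Y l; μ] := by
    intro l
    rcases eq_or_ne l i with rfl | hl
    · simp only [Pi.single_eq_same]; ring
    · simp [Pi.single_eq_of_ne hl]
  simp only [hterm, sum_add_distrib, sum_pi_single', mem_univ, if_true]

lemma integral_sub_sum_const_mul_eq_zero {m : ℝ} (hY : ∀ i, Integrable (Y i) μ)
    (hmean : ∀ i, ∫ ω, Y i ω ∂μ = m) {w : ι → ℝ} (hw : ∑ i, w i = 1) (i : ι) :
    ∫ ω, (Y i ω - ∑ l, w l * Y l ω) ∂μ = 0 := by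
  have hint : ∀ l ∈ univ, Integrable (fun ω => w l * Y l ω) μ := fun l _ => (hY l).const_mul _
  rw [integral_sub (hY i) (integrable_finsetSum _ hint), integral_finsetSum _ hint]
  simp only [integral_const_mul, hmean, ← sum_mul, hw, one_mul, sub_self]

end Residual

lemma sum_div_one_add_sum_mul_add_eq {ι K : Type*} [Fintype ι] [Field K] {w h : ι → K}
    (hh : ∀ i, h i * (1 - 2 * w i) = w i ^ 2) (hH : 1 + ∑ l, h l ≠ 0) (s : ι → K) :
    ∑ i, h i / (1 + ∑ l, h l) * ((1 - 2 * w i) * s i + ∑ l, w l ^ 2 * s l)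
      = ∑ i, w i ^ 2 * s i := by
  have hexpand : ∀ i, h i / (1 + ∑ l, h l) * ((1 - 2 * w i) * s i + ∑ l, w l ^ 2 * s l)
      = (w i ^ 2 * s i + h i * ∑ l, w l ^ 2 * s l) / (1 + ∑ l, h l) := by
    intro i
    rw [← hh i]
    ring
  rw [sum_congr rfl fun i _ => hexpand i, ← sum_div, sum_add_distrib, ← sum_mul]
  field_simp

theorem dive_unbiasedness_general
    {Ω : Type*} [MeasureSpace Ω] [IsProbabilityMeasure (ℙ : Measure Ω)]
    {N : ℕ} (Y : Fin N → Ω → ℝ) (μ : ℝ) (w : Fin N → ℝ)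
    (hindep : iIndepFun Y ℙ)
    (hL2 : ∀ i, MemLp (Y i) 2 ℙ)
    (hmean : ∀ i, ∫ ω, Y i ω ∂ℙ = μ)
    (hwlt : ∀ i, w i < 1 / 2) (hsum : ∑ i, w i = 1)
    (h : Fin N → ℝ) (hh : ∀ i, h i = (w i) ^ 2 / (1 - 2 * w i))
    (H : ℝ) (hH : H = ∑ l, h l) :
    (∫ ω, ∑ i, (h i / (1 + H)) * (Y i ω - ∑ l, w l * Y l ω) ^ 2 ∂ℙ
        = variance (fun ω => ∑ i, w i * Y i ω) ℙ)
      ∧ variance (fun ω => ∑ i, w i * Y i ω) ℙ = ∑ i, (w i) ^ 2 * variance (Y i) ℙ := by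
  have hpair : Pairwise fun i j => Y i ⟂ᵢ[ℙ] Y j := fun i j hij => hindep.indepFun hij
  have hvar := variance_sum_const_mul_of_pairwise_indepFun hL2 hpair w
  refine ⟨?_, hvar⟩
  have hpos : ∀ i, 0 < 1 - 2 * w i := fun i => by linarith [hwlt i]
  have hres : ∀ i, MemLp (fun ω => Y i ω - ∑ l, w l * Y l ω) 2 ℙ := fun i =>
    (hL2 i).sub (memLp_finsetSum _ fun l _ => (hL2 l).const_mul (w l))
  have hsecond : ∀ i, ∫ ω, (Y i ω - ∑ l, w l * Y l ω) ^ 2 ∂ℙ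
      = (1 - 2 * w i) * Var[Y i; ℙ] + ∑ l, w l ^ 2 * Var[Y l; ℙ] := fun i => by
    rw [← variance_sub_sum_const_mul_of_pairwise_indepFun hL2 hpair w i,
      variance_of_integral_eq_zero (hres i).aemeasurable
        (integral_sub_sum_const_mul_eq_zero (fun l => (hL2 l).integrable one_le_two) hmean hsum i)]
  have hH0 : 1 + ∑ l, h l ≠ 0 := by
    have : 0 ≤ ∑ l, h l := sum_nonneg fun i _ => hh i ▸ div_nonneg (sq_nonneg _) (hpos i).le
    positivity
  rw [integral_finsetSum _ fun i _ => (hres i).integrable_sq.const_mul _, hvar, hH]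
  simp only [integral_const_mul, hsecond]
  exact sum_div_one_add_sum_mul_add_eq
    (fun i => by rw [hh i, div_mul_cancel₀ _ (hpos i).ne']) hH0 _

theorem dive_unbiasedness
    {Ω : Type*} [MeasureSpace Ω] [IsProbabilityMeasure (ℙ : Measure Ω)]
    {N : ℕ} (Y : Fin N → Ω → ℝ) (μ : ℝ) (w : Fin N → ℝ)
    (hindep : iIndepFun Y ℙ)
    (hmeas : ∀ i, Measurable (Y i))
    (hL2 : ∀ i, MemLp (Y i) 2 ℙ)
    (hmean : ∀ i, ∫ ω, Y i ω ∂ℙ = μ)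
    (hw : ∀ i, 0 ≤ w i) (hwlt : ∀ i, w i < 1 / 2) (hsum : ∑ i, w i = 1)
    (h : Fin N → ℝ) (hh : ∀ i, h i = (w i) ^ 2 / (1 - 2 * w i))
    (H : ℝ) (hH : H = ∑ l, h l) :
    (∫ ω, ∑ i, (h i / (1 + H)) * (Y i ω - ∑ l, w l * Y l ω) ^ 2 ∂ℙ
        = variance (fun ω => ∑ i, w i * Y i ω) ℙ)
      ∧ variance (fun ω => ∑ i, w i * Y i ω) ℙ = ∑ i, (w i) ^ 2 * variance (Y i) ℙ :=
  dive_unbiasedness_general Y μ w hindep hL2 hmean hwlt hsum h hh H hH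
end

section
/- Suppose all N studies have equal weights w_i = 1/N with N ≥ 3. Then the DiVE variance estimator Σ_i [h_i/(1+Σ_ℓ h_ℓ)](Y_i − μ̂)² with h_i = w_i²/(1−2w_i) reduces to (1/(N(N−1))) Σ_i (Y_i − Ȳ)², where Ȳ = (1/N) Σ_i Y_i is the sample mean. -/
open Finset

noncomputable section

def diveLeverage (w : ℝ) : ℝ := w ^ 2 / (1 - 2 * w)

def diveVariance {ι : Type*} [Fintype ι] (w Y : ι → ℝ) : ℝ :=
  ∑ i, (diveLeverage (w i) / (1 + ∑ l, diveLeverage (w l))) * (Y i - ∑ l, w l * Y l) ^ 2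

end

theorem diveVariance_const_weights {ι : Type*} [Fintype ι] (c : ℝ) (Y : ι → ℝ) :
    diveVariance (fun _ => c) Y
      = diveLeverage c / (1 + Fintype.card ι * diveLeverage c) * ∑ i, (Y i - c * ∑ l, Y l) ^ 2 := by
  simp only [diveVariance, sum_const, card_univ, nsmul_eq_mul, ← mul_sum]

theorem diveLeverage_inv_div_one_add {n : ℝ} (hn : 2 < n) :
    diveLeverage (1 / n) / (1 + n * diveLeverage (1 / n)) = 1 / (n * (n - 1)) := by
  have hn0 : n ≠ 0 := by linarith
  have hn1 : n - 1 ≠ 0 := by linarith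
  have hn2 : n - 2 ≠ 0 := by linarith
  have hlev : diveLeverage (1 / n) = 1 / (n * (n - 2)) := by
    rw [diveLeverage]
    field_simp
  have hden : 1 + n * diveLeverage (1 / n) = (n - 1) / (n - 2) := by
    rw [hlev]
    field_simp
    ring
  rw [hden, hlev]
  field_simp

theorem dive_equal_weights_reduction
    {N : ℕ} (hN : 3 ≤ N) (Y : Fin N → ℝ) (w : Fin N → ℝ)
    (hw : ∀ i, w i = 1 / (N : ℝ))
    (h : Fin N → ℝ) (hh : ∀ i, h i = (w i) ^ 2 / (1 - 2 * w i)) :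
    ∑ i, (h i / (1 + ∑ l, h l)) * (Y i - ∑ l, w l * Y l) ^ 2
      = (1 / ((N : ℝ) * ((N : ℝ) - 1))) * ∑ i, (Y i - (1 / (N : ℝ)) * ∑ l, Y l) ^ 2 := by
  obtain rfl : h = fun i => diveLeverage (w i) := funext hh
  obtain rfl : w = fun _ => 1 / (N : ℝ) := funext hw
  have hN' : (2 : ℝ) < N := by exact_mod_cast hN
  change diveVariance _ Y = _
  rw [diveVariance_const_weights, Fintype.card_fin, diveLeverage_inv_div_one_add hN']
end

section
/- Let w_1,...,w_N ∈ [0, 1/2) with Σ w_i = 1, h_i = w_i²/(1−2w_i), H = Σ h_ℓ, and let v_1,...,v_N ≥ 0. Then Σ_i [h_i/(1+H)]·[(1−2w_i)v_i + Σ_ℓ w_ℓ² v_ℓ] = Σ_i w_i² v_i. -/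
open Finset

/- Writing `w_i² v_i = h_i · c_i` with `c_i = (1 - 2 w_i) v_i`, both sides are built from
`S = Σ h_l c_l`: the left side is `(Σ h_i c_i + H S) / (1 + H) = S`. -/

theorem sum_div_one_add_sum_mul_add_sum {ι K : Type*} [Field K] (s : Finset ι) (h c : ι → K)
    (hne : 1 + ∑ i ∈ s, h i ≠ 0) :
    ∑ i ∈ s, h i / (1 + ∑ l ∈ s, h l) * (c i + ∑ l ∈ s, h l * c l) = ∑ i ∈ s, h i * c i := by
  set H := ∑ l ∈ s, h l
  set S := ∑ l ∈ s, h l * c l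
  calc ∑ i ∈ s, h i / (1 + H) * (c i + S)
      = (∑ i ∈ s, h i * c i + (∑ i ∈ s, h i) * S) / (1 + H) := by
        rw [sum_mul, ← sum_add_distrib, sum_div]
        exact sum_congr rfl fun i _ => by ring
    _ = S := by field_simp; ring

theorem dive_algebraic_core_general
    {N : ℕ} (w v : Fin N → ℝ)
    (hwlt : ∀ i, w i < 1 / 2)
    (h : Fin N → ℝ) (hh : ∀ i, h i = (w i) ^ 2 / (1 - 2 * w i))
    (H : ℝ) (hH : H = ∑ l, h l) :
    ∑ i, (h i / (1 + H)) * ((1 - 2 * w i) * v i + ∑ l, (w l) ^ 2 * v l)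
      = ∑ i, (w i) ^ 2 * v i := by
  have hpos : ∀ i, 0 < 1 - 2 * w i := fun i => by linarith [hwlt i]
  have hweight : ∀ i, (w i) ^ 2 * v i = h i * ((1 - 2 * w i) * v i) := fun i => by
    rw [hh i, ← mul_assoc, div_mul_cancel₀ _ (hpos i).ne']
  have hH_nonneg : 0 ≤ H := hH ▸ sum_nonneg fun i _ => hh i ▸ div_nonneg (sq_nonneg _) (hpos i).le
  simp only [hweight, hH]
  exact sum_div_one_add_sum_mul_add_sum _ _ _ (by rw [← hH]; positivity)

theorem dive_algebraic_core
    {N : ℕ} (w v : Fin N → ℝ)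
    (hw : ∀ i, 0 ≤ w i) (hwlt : ∀ i, w i < 1 / 2) (hsum : ∑ i, w i = 1)
    (hv : ∀ i, 0 ≤ v i)
    (h : Fin N → ℝ) (hh : ∀ i, h i = (w i) ^ 2 / (1 - 2 * w i))
    (H : ℝ) (hH : H = ∑ l, h l) :
    ∑ i, (h i / (1 + H)) * ((1 - 2 * w i) * v i + ∑ l, (w l) ^ 2 * v l)
      = ∑ i, (w i) ^ 2 * v i :=
  dive_algebraic_core_general w v hwlt h hh H hH
end

section
/- Let Y_1^(n),...,Y_N^(n) be, for each n, independent random variables with E[Y_i^(n)] = μ + b_i^(n) where b_i^(n) → 0 as n → ∞, and with variances Var(Y_i^(n)) = σ_i² fixed and finite. Let fixed weights w_i ∈ [0,1/2) sum to 1, define μ̂^(n) = Σ w_i Y_i^(n), h_i = w_i²/(1−2w_i), and V̂^(n) = Σ_i [h_i/(1+Σh_ℓ)](Y_i^(n) − μ̂^(n))². Then E[V̂^(n)] → Σ_i w_i² σ_i² = lim_n Var(μ̂^(n)) as n → ∞. -/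
/-!
Write `Y_i - μ̂ = ∑ₗ (δᵢₗ - wₗ) Yₗ`. By independence its second moment is
`(1 - 2wᵢ)σᵢ² + S + βᵢ²` with `S = ∑ₗ wₗ²σₗ²` and `βᵢ = bᵢ - ∑ₗ wₗbₗ` its mean. The DiVE
weights satisfy `hᵢ(1 - 2wᵢ) = wᵢ²`, so `∑ᵢ hᵢ((1 - 2wᵢ)σᵢ² + S) = S + HS = (1 + H)S`:
after normalising by `1 + H` the variance parts add up to exactly `S`, and the only bias
left is `∑ᵢ hᵢβᵢ²/(1 + H)`, which vanishes as the `bᵢ` do.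
-/

open MeasureTheory ProbabilityTheory Finset Filter Topology

section

variable {ι : Type*} [Fintype ι] [DecidableEq ι]

lemma sum_sq_pi_single_sub_mul (i : ι) (w v : ι → ℝ) :
    ∑ l, (Pi.single i 1 - w : ι → ℝ) l ^ 2 * v l
      = (1 - 2 * w i) * v i + ∑ l, w l ^ 2 * v l := by
  have hexpand : ∀ l, (Pi.single i 1 - w : ι → ℝ) l ^ 2 * v l
      = (Pi.single i ((1 - 2 * w i) * v i) : ι → ℝ) l + w l ^ 2 * v l := by
    intro l
    rcases eq_or_ne l i with rfl | hl
    · simp only [Pi.sub_apply, Pi.single_eq_same]; ring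
    · simp [Pi.single_eq_of_ne hl]
  simp only [hexpand, sum_add_distrib, sum_pi_single', mem_univ, if_true]

lemma sub_sum_mul_eq_sum_pi_single_sub_mul (i : ι) (w x : ι → ℝ) :
    x i - ∑ l, w l * x l = ∑ l, (Pi.single i 1 - w : ι → ℝ) l * x l := by
  simp [sub_mul, sum_sub_distrib, Pi.single_apply]

end

lemma sum_dive_weight_mul {ι : Type*} [Fintype ι] {w h : ι → ℝ} (hwlt : ∀ i, w i < 1 / 2)
    (hh : ∀ i, h i = w i ^ 2 / (1 - 2 * w i)) (v : ι → ℝ) :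
    ∑ i, h i / (1 + ∑ l, h l) * ((1 - 2 * w i) * v i + ∑ l, w l ^ 2 * v l)
      = ∑ l, w l ^ 2 * v l := by
  have hpos : ∀ i, 0 < 1 - 2 * w i := fun i => by linarith [hwlt i]
  have hh_mul : ∀ i, h i * (1 - 2 * w i) = w i ^ 2 := fun i => by
    rw [hh i, div_mul_cancel₀ _ (hpos i).ne']
  have hsum_pos : 0 < 1 + ∑ l, h l := by
    have : 0 ≤ ∑ l, h l := sum_nonneg fun i _ => hh i ▸ div_nonneg (sq_nonneg _) (hpos i).le
    linarith
  calc ∑ i, h i / (1 + ∑ l, h l) * ((1 - 2 * w i) * v i + ∑ l, w l ^ 2 * v l)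
      = (∑ i, (h i * (1 - 2 * w i)) * v i + (∑ i, h i) * ∑ l, w l ^ 2 * v l)
          / (1 + ∑ l, h l) := by
        rw [sum_mul, ← sum_add_distrib, sum_div]
        exact sum_congr rfl fun i _ => by ring
    _ = ∑ l, w l ^ 2 * v l := by
        simp only [hh_mul]
        field_simp

section

variable {Ω : Type*} [MeasurableSpace Ω] {μ : Measure Ω} {ι : Type*} [Fintype ι]
  {X : ι → Ω → ℝ}

lemma ProbabilityTheory.iIndepFun.variance_sum_const_mul (hX : iIndepFun X μ)
    (hL2 : ∀ i, MemLp (X i) 2 μ) (c : ι → ℝ) :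
    variance (fun ω => ∑ l, c l * X l ω) μ = ∑ l, c l ^ 2 * variance (X l) μ := by
  have hsum : (fun ω => ∑ l, c l * X l ω) = ∑ l, c l • X l := by
    funext ω; simp
  rw [hsum, IndepFun.variance_sum fun l _ => (hL2 l).const_smul (c l)]
  · simp only [variance_smul]
  · exact fun i _ j _ hij =>
      (hX.indepFun hij).comp (measurable_const_mul _) (measurable_const_mul _)

lemma integral_sum_const_mul (hX : ∀ i, Integrable (X i) μ) (c : ι → ℝ) :
    ∫ ω, ∑ l, c l * X l ω ∂μ = ∑ l, c l * ∫ ω, X l ω ∂μ := by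
  rw [integral_finsetSum _ fun l _ => (hX l).const_mul _]
  simp only [integral_const_mul]

lemma integral_sq_eq_variance_add_sq [IsProbabilityMeasure μ] {Z : Ω → ℝ}
    (hZ : MemLp Z 2 μ) :
    ∫ ω, Z ω ^ 2 ∂μ = variance Z μ + (∫ ω, Z ω ∂μ) ^ 2 := by
  rw [variance_eq_sub hZ]; simp

lemma integral_sq_sub_sum_mul [IsProbabilityMeasure μ] (hX : iIndepFun X μ)
    (hL2 : ∀ i, MemLp (X i) 2 μ) (w : ι → ℝ) (i : ι) :
    ∫ ω, (X i ω - ∑ l, w l * X l ω) ^ 2 ∂μ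
      = (1 - 2 * w i) * variance (X i) μ + ∑ l, w l ^ 2 * variance (X l) μ
        + (∫ ω, X i ω ∂μ - ∑ l, w l * ∫ ω, X l ω ∂μ) ^ 2 := by
  classical
  have hres : ∀ ω,
      X i ω - ∑ l, w l * X l ω = ∑ l, (Pi.single i 1 - w : ι → ℝ) l * X l ω :=
    fun ω => sub_sum_mul_eq_sum_pi_single_sub_mul i w (X · ω)
  have hL2_res : MemLp (fun ω => ∑ l, (Pi.single i 1 - w : ι → ℝ) l * X l ω) 2 μ :=
    memLp_finsetSum _ fun l _ => (hL2 l).const_mul _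
  simp only [hres, sub_sum_mul_eq_sum_pi_single_sub_mul i w (fun l => ∫ ω, X l ω ∂μ)]
  rw [integral_sq_eq_variance_add_sq hL2_res, hX.variance_sum_const_mul hL2,
    sum_sq_pi_single_sub_mul, integral_sum_const_mul fun l => (hL2 l).integrable one_le_two]

lemma integral_dive_estimator [IsProbabilityMeasure μ] (hX : iIndepFun X μ)
    (hL2 : ∀ i, MemLp (X i) 2 μ) {w h : ι → ℝ} (hwlt : ∀ i, w i < 1 / 2)
    (hh : ∀ i, h i = w i ^ 2 / (1 - 2 * w i)) :
    ∫ ω, ∑ i, h i / (1 + ∑ l, h l) * (X i ω - ∑ l, w l * X l ω) ^ 2 ∂μ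
      = ∑ l, w l ^ 2 * variance (X l) μ
        + ∑ i, h i / (1 + ∑ l, h l) * (∫ ω, X i ω ∂μ - ∑ l, w l * ∫ ω, X l ω ∂μ) ^ 2 := by
  have hL2_res : ∀ i, MemLp (fun ω => X i ω - ∑ l, w l * X l ω) 2 μ := fun i =>
    (hL2 i).sub (memLp_finsetSum _ fun l _ => (hL2 l).const_mul _)
  rw [integral_sum_const_mul fun i => (hL2_res i).integrable_sq,
    ← sum_dive_weight_mul hwlt hh fun l => variance (X l) μ, ← sum_add_distrib]
  exact sum_congr rfl fun i _ => by rw [integral_sq_sub_sum_mul hX hL2]; ring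

end

theorem dive_asymptotic_unbiasedness_general
    {Ω : Type*} [MeasureSpace Ω] [IsProbabilityMeasure (ℙ : Measure Ω)]
    {N : ℕ} (Y : ℕ → Fin N → Ω → ℝ) (μ : ℝ) (b : ℕ → Fin N → ℝ) (σ2 : Fin N → ℝ)
    (w : Fin N → ℝ)
    (hindep : ∀ n, iIndepFun (Y n) ℙ)
    (hL2 : ∀ n i, MemLp (Y n i) 2 ℙ)
    (hmean : ∀ n i, ∫ ω, Y n i ω ∂ℙ = μ + b n i)
    (hb : ∀ i, Tendsto (fun n => b n i) atTop (𝓝 0))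
    (hvar : ∀ n i, variance (Y n i) ℙ = σ2 i)
    (hwlt : ∀ i, w i < 1 / 2) (hsum : ∑ i, w i = 1)
    (h : Fin N → ℝ) (hh : ∀ i, h i = (w i) ^ 2 / (1 - 2 * w i)) :
    Tendsto (fun n => ∫ ω, ∑ i, (h i / (1 + ∑ l, h l)) *
          (Y n i ω - ∑ l, w l * Y n l ω) ^ 2 ∂ℙ) atTop
        (𝓝 (∑ i, (w i) ^ 2 * σ2 i))
      ∧ Tendsto (fun n => variance (fun ω => ∑ l, w l * Y n l ω) ℙ) atTop
        (𝓝 (∑ i, (w i) ^ 2 * σ2 i)) := by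
  have hbias : ∀ n i, ∫ ω, Y n i ω ∂ℙ - ∑ l, w l * ∫ ω, Y n l ω ∂ℙ
      = b n i - ∑ l, w l * b n l := by
    intro n i
    simp only [hmean, mul_add, sum_add_distrib, ← sum_mul, hsum]
    ring
  have hbias_lim : Tendsto
      (fun n => ∑ i, h i / (1 + ∑ l, h l) * (b n i - ∑ l, w l * b n l) ^ 2) atTop (𝓝 0) := by
    simpa using tendsto_finsetSum _ fun i _ =>
      (((hb i).sub (tendsto_finsetSum _ fun l _ => (hb l).const_mul (w l))).pow 2).const_mul
        (h i / (1 + ∑ l, h l))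
  constructor
  · simp only [integral_dive_estimator (hindep _) (hL2 _) hwlt hh, hvar, hbias]
    simpa using tendsto_const_nhds.add hbias_lim
  · simp only [(hindep _).variance_sum_const_mul (hL2 _), hvar]
    exact tendsto_const_nhds

theorem dive_asymptotic_unbiasedness
    {Ω : Type*} [MeasureSpace Ω] [IsProbabilityMeasure (ℙ : Measure Ω)]
    {N : ℕ} (Y : ℕ → Fin N → Ω → ℝ) (μ : ℝ) (b : ℕ → Fin N → ℝ) (σ2 : Fin N → ℝ)
    (w : Fin N → ℝ)
    (hindep : ∀ n, iIndepFun (Y n) ℙ)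
    (hmeas : ∀ n i, Measurable (Y n i))
    (hL2 : ∀ n i, MemLp (Y n i) 2 ℙ)
    (hmean : ∀ n i, ∫ ω, Y n i ω ∂ℙ = μ + b n i)
    (hb : ∀ i, Tendsto (fun n => b n i) atTop (𝓝 0))
    (hvar : ∀ n i, variance (Y n i) ℙ = σ2 i)
    (hw : ∀ i, 0 ≤ w i) (hwlt : ∀ i, w i < 1 / 2) (hsum : ∑ i, w i = 1)
    (h : Fin N → ℝ) (hh : ∀ i, h i = (w i) ^ 2 / (1 - 2 * w i)) :
    Tendsto (fun n => ∫ ω, ∑ i, (h i / (1 + ∑ l, h l)) *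
          (Y n i ω - ∑ l, w l * Y n l ω) ^ 2 ∂ℙ) atTop
        (𝓝 (∑ i, (w i) ^ 2 * σ2 i))
      ∧ Tendsto (fun n => variance (fun ω => ∑ l, w l * Y n l ω) ℙ) atTop
        (𝓝 (∑ i, (w i) ^ 2 * σ2 i)) :=
  dive_asymptotic_unbiasedness_general Y μ b σ2 w hindep hL2 hmean hb hvar hwlt hsum h hh
end
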